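/- arXiv:1911.10642 — 6 statements merged into one kernel-verified Lean document; each statement's English description precedes it below -/
import Mathlib

section
/- Let M = {a_0, ..., a_n} be a finite pointed metric space. The molecule m_{i,j} is an extreme point of B_{F(M)} = conv{m_{u,v} : u ≠ v} if and only if d_{i,j} < d_{i,k} + d_{k,j} for every k ∉ {i,j}. -/
noncomputable def stdVec (n : ℕ) (i : Fin (n + 1)) : Fin n → ℝ :=
  fun j => if (j : ℕ) + 1 = (i : ℕ) then 1 else 0

noncomputable def molecule (n : ℕ) (d : Fin (n + 1) → Fin (n + 1) → ℝ)
    (i j : Fin (n + 1)) : Fin n → ℝ :=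
  (d i j)⁻¹ • (stdVec n i - stdVec n j)

noncomputable def freeBall (n : ℕ) (d : Fin (n + 1) → Fin (n + 1) → ℝ) :
    Set (Fin n → ℝ) :=
  convexHull ℝ {x | ∃ i j : Fin (n + 1), i ≠ j ∧ x = molecule n d i j}

/-!
If `d i j = d i k + d k j` for a third point `k`, then `m_ij` is the convex combination
`(d i k / d i j) • m_ik + (d k j / d i j) • m_kj` of two other molecules. Conversely, a function
`f` on `M` pairs with molecules as `⟨f, m_pq⟩ = (f p - f q) / d p q`; when all triangle
inequalities through `i, j` are strict, a small perturbation of `p ↦ (d p j - d p i) / 2` gives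
`⟨f, m_ij⟩ > 1 ≥ ⟨f, m_pq⟩` for every other molecule, so `m_ij` is an exposed, hence extreme, point.
-/

section Convex

variable {E : Type*} [AddCommGroup E] [Module ℝ E]

theorem convex_insert_setOf_lt (l : E →ₗ[ℝ] ℝ) (x : E) : Convex ℝ (insert x {y | l y < l x}) := by
  refine convex_iff_pairwise_pos.2 fun y₁ h₁ y₂ h₂ hne a b ha hb hab => Or.inr ?_
  change l (a • y₁ + b • y₂) < l x
  rw [map_add, map_smul, map_smul, smul_eq_mul, smul_eq_mul]
  obtain rfl : a = 1 - b := by linarith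
  rcases h₁ with rfl | (h₁ : l y₁ < l x) <;> rcases h₂ with rfl | (h₂ : l y₂ < _)
  · exact absurd rfl hne
  · nlinarith
  · nlinarith
  · nlinarith

theorem mem_extremePoints_convexHull_of_forall_lt {s : Set E} {x : E} (l : E →ₗ[ℝ] ℝ)
    (hx : x ∈ s) (hlt : ∀ y ∈ s, y ≠ x → l y < l x) :
    x ∈ (convexHull ℝ s).extremePoints ℝ := by
  have hsub : convexHull ℝ s ⊆ insert x {y | l y < l x} :=
    convexHull_min (fun y hy => (eq_or_ne y x).imp id (hlt y hy)) (convex_insert_setOf_lt l x)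
  have hle : ∀ y ∈ convexHull ℝ s, l y ≤ l x := fun y hy =>
    (hsub hy).elim (fun h => h ▸ le_rfl) fun h => le_of_lt h
  have heq : ∀ y ∈ convexHull ℝ s, l x ≤ l y → y = x := fun y hy h =>
    (hsub hy).resolve_right h.not_gt
  refine ⟨subset_convexHull ℝ s hx, fun y₁ h₁ y₂ h₂ ⟨a, b, ha, hb, hab, hxy⟩ => heq y₁ h₁ ?_⟩
  obtain rfl : a = 1 - b := by linarith
  have hval : (1 - b) * l y₁ + b * l y₂ = l x := by simp [← hxy]
  nlinarith [hle y₁ h₁, hle y₂ h₂]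

end Convex

open Filter Topology in
theorem Finite.exists_pos_forall_le_of_pos {α : Type*} [Finite α] (g : α → ℝ) :
    ∃ c > 0, ∀ a, 0 < g a → c ≤ g a := by
  have h : ∀ᶠ c in 𝓝[>] (0 : ℝ), 0 < c ∧ ∀ a, 0 < g a → c ≤ g a :=
    (eventually_mem_nhdsWithin).and <| eventually_all.2 fun a => eventually_imp_distrib_left.2
      fun ha => nhdsWithin_le_nhds (eventually_le_nhds ha)
  exact h.exists

section FreeSpace

variable {n : ℕ} (d : Fin (n + 1) → Fin (n + 1) → ℝ)

theorem stdVec_zero : stdVec n 0 = 0 := by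
  ext t
  simp [stdVec]

theorem stdVec_succ (t : Fin n) : stdVec n t.succ = Pi.single t 1 := by
  ext s
  simp [stdVec, Pi.single_apply, Fin.ext_iff]

/-- `f : M → ℝ`, shifted to vanish at the base point `a₀`, as a functional on `F(M) = ℝⁿ`. -/
noncomputable def lipPairing (f : Fin (n + 1) → ℝ) : (Fin n → ℝ) →ₗ[ℝ] ℝ :=
  Fintype.linearCombination ℝ fun t => f t.succ - f 0

theorem lipPairing_stdVec (f : Fin (n + 1) → ℝ) (p : Fin (n + 1)) :
    lipPairing f (stdVec n p) = f p - f 0 := by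
  cases p using Fin.cases with
  | zero => simp [stdVec_zero]
  | succ t => simp [lipPairing, stdVec_succ, Fintype.linearCombination_apply_single]

theorem lipPairing_molecule (f : Fin (n + 1) → ℝ) (p q : Fin (n + 1)) :
    lipPairing f (molecule n d p q) = (f p - f q) / d p q := by
  rw [molecule, map_smul, map_sub, lipPairing_stdVec, lipPairing_stdVec, smul_eq_mul]
  ring

theorem molecule_mem_freeBall {p q : Fin (n + 1)} (hpq : p ≠ q) :
    molecule n d p q ∈ freeBall n d :=
  subset_convexHull ℝ _ ⟨p, q, hpq, rfl⟩

theorem molecule_ne_molecule {i j k : Fin (n + 1)} (hij : i ≠ j) (hkj : k ≠ j) (hd : d i j ≠ 0) :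
    molecule n d i k ≠ molecule n d i j := by
  intro h
  have := congrArg (lipPairing fun p => if p = j then (1 : ℝ) else 0) h
  simp only [lipPairing_molecule, if_neg hij, if_neg hkj, ↓reduceIte, sub_self, zero_div] at this
  exact div_ne_zero (by norm_num) hd this.symm

theorem molecule_mem_openSegment {i j k : Fin (n + 1)} (hik : 0 < d i k) (hkj : 0 < d k j)
    (hijk : d i j = d i k + d k j) :
    molecule n d i j ∈ openSegment ℝ (molecule n d i k) (molecule n d k j) := by
  have hij : 0 < d i j := by linarith
  refine ⟨d i k / d i j, d k j / d i j, by positivity, by positivity, by field_simp; linarith, ?_⟩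
  simp only [molecule, smul_smul]
  field_simp
  simp only [smul_sub]
  abel

theorem lt_add_of_molecule_mem_extremePoints (hpos : ∀ p q, p ≠ q → 0 < d p q)
    (htri : ∀ p q r, d p r ≤ d p q + d q r) {i j k : Fin (n + 1)} (hij : i ≠ j)
    (hext : molecule n d i j ∈ (freeBall n d).extremePoints ℝ) (hki : k ≠ i) (hkj : k ≠ j) :
    d i j < d i k + d k j := by
  refine (htri i k j).lt_of_ne fun heq => ?_
  have hseg := molecule_mem_openSegment d (hpos i k hki.symm) (hpos k j hkj) heq
  exact molecule_ne_molecule d hij hkj (hpos i j hij).ne'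
    (hext.2 (molecule_mem_freeBall d hki.symm) (molecule_mem_freeBall d hkj) hseg)

theorem exists_peak_fun (hsymm : ∀ p q, d p q = d q p) (hzero : ∀ p, d p p = 0)
    (htri : ∀ p q r, d p r ≤ d p q + d q r) {i j : Fin (n + 1)} (hij : i ≠ j)
    (hstrict : ∀ k, k ≠ i → k ≠ j → d i j < d i k + d k j) :
    ∃ f : Fin (n + 1) → ℝ, d i j < f i - f j ∧
      ∀ p q, p ≠ q → ¬(p = i ∧ q = j) → f p - f q ≤ d p q := by
  obtain ⟨c, hc, hcgap⟩ :=
    Finite.exists_pos_forall_le_of_pos fun k => (d i k + d k j - d i j) / 2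
  -- `(d p j - d p i) / 2` alone attains the value `d p q` at every pair `(p, q)` lying in this
  -- order on a geodesic from `i` to `j`; raising it at `i` and lowering it at `j` by `c` breaks
  -- the ties without violating the bound, since `c` is at most half of every triangle gap.
  set f : Fin (n + 1) → ℝ := fun p =>
    (d p j - d p i) / 2 + (if p = i then c else 0) - (if p = j then c else 0)
  have hfi : f i = d i j / 2 + c := by simp [f, hij, hzero]
  have hfj : f j = -d i j / 2 - c := by simp [f, hij.symm, hzero, hsymm j i]
  have hf_le : ∀ p, p ≠ i → f p ≤ (d p j - d p i) / 2 := fun p hpi => by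
    simp only [f, if_neg hpi]
    split_ifs <;> linarith
  have hf_ge : ∀ q, q ≠ j → (d q j - d q i) / 2 ≤ f q := fun q hqj => by
    simp only [f, if_neg hqj]
    split_ifs <;> linarith
  refine ⟨f, by linarith, fun p q hpq hne => ?_⟩
  by_cases hpi : p = i
  · subst hpi
    have hqj : q ≠ j := fun h => hne ⟨rfl, h⟩
    have := hcgap q (by linarith [hstrict q (Ne.symm hpq) hqj])
    linarith [hf_ge q hqj, hsymm q p]
  by_cases hqj : q = j
  · subst hqj
    have := hcgap p (by linarith [hstrict p hpi hpq])
    linarith [hf_le p hpi, hsymm p i]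
  linarith [hf_le p hpi, hf_ge q hqj, htri p q j, htri q p i, hsymm p q]

theorem molecule_mem_extremePoints_of_lt (hsymm : ∀ p q, d p q = d q p) (hzero : ∀ p, d p p = 0)
    (hpos : ∀ p q, p ≠ q → 0 < d p q) (htri : ∀ p q r, d p r ≤ d p q + d q r)
    {i j : Fin (n + 1)} (hij : i ≠ j) (hstrict : ∀ k, k ≠ i → k ≠ j → d i j < d i k + d k j) :
    molecule n d i j ∈ (freeBall n d).extremePoints ℝ := by
  obtain ⟨f, hfij, hf⟩ := exists_peak_fun d hsymm hzero htri hij hstrict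
  refine mem_extremePoints_convexHull_of_forall_lt (lipPairing f) ⟨i, j, hij, rfl⟩ ?_
  rintro _ ⟨p, q, hpq, rfl⟩ hne
  rw [lipPairing_molecule, lipPairing_molecule]
  calc (f p - f q) / d p q ≤ 1 :=
        (div_le_one (hpos p q hpq)).2 (hf p q hpq fun ⟨hp, hq⟩ => hne (hp ▸ hq ▸ rfl))
    _ < (f i - f j) / d i j := (one_lt_div (hpos i j hij)).2 hfij

end FreeSpace

theorem stmt2 (n : ℕ) (d : Fin (n + 1) → Fin (n + 1) → ℝ)
    (hsymm : ∀ i j, d i j = d j i) (hzero : ∀ i, d i i = 0)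
    (hpos : ∀ i j, i ≠ j → 0 < d i j)
    (htri : ∀ i j k, d i k ≤ d i j + d j k)
    (i j : Fin (n + 1)) (hij : i ≠ j) :
    molecule n d i j ∈ (freeBall n d).extremePoints ℝ ↔
      ∀ k, k ≠ i → k ≠ j → d i j < d i k + d k j :=
  ⟨fun hext _ hki hkj => lt_add_of_molecule_mem_extremePoints d hpos htri hij hext hki hkj,
    molecule_mem_extremePoints_of_lt d hsymm hzero hpos htri hij⟩
end

section
/- Let M be a finite metric space whose canonical graph is the complete bipartite graph K_{2,n-1} with all edge weights equal (a spiderweb with apexes x, y). Then the Lipschitz-free space F(M) is isometric to ℓ_1^{n-1} ⊕_∞ ℝ; equivalently, B_{F(M)} = B + [−u_0, u_0] where B is a linear image of the cross-polytope B_1^{n-1} in a hyperplane and u_0 = m_{y,x}. -/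
open Pointwise

/-!
Write `u = m_{y,x}` and, for each leg `z ∉ {x, y}`, `w_z = m_{x,z} + u` (`spoke`). The spiderweb
distances give `m_{x,z} = w_z - u`, `m_{y,z} = w_z + u`, `m_{z,z'} = (w_{z'} - w_z) / 2`, and
`m_{z,x}`, `m_{z,y}`, `m_{x,y}` are the negatives of these. So the molecules through a leg are
exactly the points `±w_z ± u`, and every other molecule is a midpoint of two of them. Hence
`B_{F(M)} = conv {±w_z ± u} = conv {±w_z} + [-u, u]`, and `conv {±w_z}` is the image of the
`ℓ¹` ball under the linear map sending the `z`-th unit vector to `w_z`.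
-/

section ConvexGeometry

variable {ι E : Type*} [Fintype ι] [AddCommGroup E] [Module ℝ E]

theorem convex_setOf_sum_abs_le_one : Convex ℝ {v : ι → ℝ | ∑ i, |v i| ≤ 1} := by
  have h : {v : ι → ℝ | ∑ i, |v i| ≤ 1} =
      (WithLp.linearEquiv 1 ℝ (ι → ℝ)).symm ⁻¹' Metric.closedBall 0 1 := by
    ext v
    simp [PiLp.norm_eq_of_L1]
  rw [h]
  exact (convex_closedBall _ _).linear_preimage _

theorem Convex.sum_smul_mem_of_zero_mem {s : Set E} (hs : Convex ℝ s) (h0 : 0 ∈ s)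
    {c : ι → ℝ} {p : ι → E} (hc : ∀ i, 0 ≤ c i) (hc1 : ∑ i, c i ≤ 1) (hp : ∀ i, p i ∈ s) :
    ∑ i, c i • p i ∈ s := by
  -- the missing weight `1 - ∑ i, c i` is put on the point `0`
  have h := hs.sum_mem (t := Finset.univ) (w := fun o : Option ι => o.elim (1 - ∑ i, c i) c)
    (z := fun o => o.elim 0 p) ?_ ?_ ?_
  · simpa [Fintype.sum_option] using h
  · rintro (_ | i) -
    exacts [sub_nonneg.2 hc1, hc i]
  · simp [Fintype.sum_option]
  · rintro (_ | i) -
    exacts [h0, hp i]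

variable [DecidableEq ι]

theorem convexHull_iUnion_single_neg_single [Nonempty ι] :
    convexHull ℝ (⋃ i, {Pi.single i 1, -Pi.single i 1} : Set (ι → ℝ)) =
      {v | ∑ i, |v i| ≤ 1} := by
  apply subset_antisymm
  · refine convexHull_min ?_ convex_setOf_sum_abs_le_one
    simp only [Set.iUnion_subset_iff, Set.insert_subset_iff, Set.singleton_subset_iff]
    intro i
    constructor <;> simp [Pi.single_apply, apply_ite]
  · intro v hv
    have hsingle : ∀ i, ∀ ε ∈ ({Pi.single i 1, -Pi.single i 1} : Set (ι → ℝ)),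
        ε ∈ convexHull ℝ (⋃ i, {Pi.single i 1, -Pi.single i 1} : Set (ι → ℝ)) :=
      fun i ε hε => subset_convexHull ℝ _ (Set.mem_iUnion.2 ⟨i, hε⟩)
    have h0 : (0 : ι → ℝ) ∈ convexHull ℝ (⋃ i, {Pi.single i 1, -Pi.single i 1}) := by
      obtain ⟨i⟩ := ‹Nonempty ι›
      simpa using (convex_convexHull ℝ _).midpoint_mem (hsingle i _ (.inl rfl))
        (hsingle i _ (.inr rfl))
    have hv_eq : v = ∑ i, |v i| • if 0 ≤ v i then Pi.single i 1 else -Pi.single i 1 := by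
      conv_lhs => rw [pi_eq_sum_univ' v]
      refine Finset.sum_congr rfl fun i _ => ?_
      split_ifs with h
      · rw [abs_of_nonneg h]
      · rw [abs_of_neg (not_le.1 h), smul_neg, neg_smul, neg_neg]
    rw [hv_eq]
    refine (convex_convexHull ℝ _).sum_smul_mem_of_zero_mem h0 (fun i => abs_nonneg _) hv
      fun i => hsingle i _ ?_
    split_ifs
    exacts [.inl rfl, .inr rfl]

theorem image_l1Ball_add_segment [Nonempty ι] (w : ι → E) (u : E) :
    Fintype.linearCombination ℝ w '' {v | ∑ i, |v i| ≤ 1} + segment ℝ (-u) u =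
      convexHull ℝ ((⋃ i, {w i, -w i}) + {-u, u}) := by
  rw [← convexHull_iUnion_single_neg_single, LinearMap.image_convexHull, ← convexHull_pair,
    convexHull_add, Set.image_iUnion]
  simp [Set.image_pair, Fintype.linearCombination_apply_single]

end ConvexGeometry

theorem Fintype.card_subtype_ne_and_ne {α : Type*} [Fintype α] [DecidableEq α] {x y : α}
    (hxy : x ≠ y) : Fintype.card {z : α // z ≠ x ∧ z ≠ y} = Fintype.card α - 2 := by
  have h : (Finset.univ.filter fun z : α => z ≠ x ∧ z ≠ y) = Finset.univ \ {x, y} := by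
    ext
    simp [not_or]
  rw [Fintype.card_subtype, h, Finset.card_sdiff_of_subset (Finset.subset_univ _),
    Finset.card_univ, Finset.card_pair hxy]

theorem inv_eq_two_mul_inv_of_two_mul_eq {a b : ℝ} (h : 2 * a = b) : a⁻¹ = 2 * b⁻¹ := by
  rw [← h, mul_inv, ← mul_assoc, mul_inv_cancel₀ two_ne_zero, one_mul]

noncomputable def spoke (n : ℕ) (d : Fin (n + 1) → Fin (n + 1) → ℝ) (x y z : Fin (n + 1)) :
    Fin n → ℝ :=
  molecule n d x z + molecule n d y x

noncomputable def spiderwebGenerators (n : ℕ) (d : Fin (n + 1) → Fin (n + 1) → ℝ)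
    (x y : Fin (n + 1)) : Set (Fin n → ℝ) :=
  (⋃ z : {z // z ≠ x ∧ z ≠ y}, {spoke n d x y z, -spoke n d x y z}) +
    {-molecule n d y x, molecule n d y x}

section Spiderweb

variable {n : ℕ} {d : Fin (n + 1) → Fin (n + 1) → ℝ} {x y : Fin (n + 1)}

theorem molecule_swap (hsymm : ∀ i j, d i j = d j i) (i j : Fin (n + 1)) :
    molecule n d i j = -molecule n d j i := by
  simp only [molecule, hsymm j i]
  module

theorem molecule_eq_spoke_sub (z : Fin (n + 1)) :
    molecule n d x z = spoke n d x y z - molecule n d y x :=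
  (add_sub_cancel_right _ _).symm

theorem molecule_eq_spoke_add (hsymm : ∀ i j, d i j = d j i) {z : Fin (n + 1)}
    (hxz : 2 * d x z = d x y) (hzy : 2 * d z y = d x y) :
    molecule n d y z = spoke n d x y z + molecule n d y x := by
  simp only [spoke, molecule, hsymm y z, hsymm y x, inv_eq_two_mul_inv_of_two_mul_eq hxz,
    inv_eq_two_mul_inv_of_two_mul_eq hzy]
  module

theorem molecule_eq_half_spoke_sub {z u : Fin (n + 1)} (hxz : 2 * d x z = d x y)
    (hxu : 2 * d x u = d x y) (hzu : d z u = d x y) :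
    molecule n d z u = (2 : ℝ)⁻¹ • (spoke n d x y u - spoke n d x y z) := by
  simp only [spoke, molecule, hzu, inv_eq_two_mul_inv_of_two_mul_eq hxz,
    inv_eq_two_mul_inv_of_two_mul_eq hxu]
  module

theorem add_mem_spiderwebGenerators {z : Fin (n + 1)} (hzx : z ≠ x) (hzy : z ≠ y)
    {a b : Fin n → ℝ} (ha : a ∈ ({spoke n d x y z, -spoke n d x y z} : Set (Fin n → ℝ)))
    (hb : b ∈ ({-molecule n d y x, molecule n d y x} : Set (Fin n → ℝ))) :
    a + b ∈ spiderwebGenerators n d x y :=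
  Set.add_mem_add (Set.mem_iUnion.2 ⟨⟨z, hzx, hzy⟩, ha⟩) hb

variable (hsymm : ∀ i j, d i j = d j i)
  (hmid : ∀ z, z ≠ x → z ≠ y → 2 * d x z = d x y ∧ 2 * d z y = d x y)
include hsymm hmid

theorem spiderwebGenerators_subset :
    spiderwebGenerators n d x y ⊆ {p | ∃ i j, i ≠ j ∧ p = molecule n d i j} := by
  rintro _ ⟨a, ha, b, hb, rfl⟩
  obtain ⟨⟨z, hzx, hzy⟩, ha⟩ := Set.mem_iUnion.1 ha
  have hxz := molecule_eq_spoke_sub (d := d) (x := x) (y := y) z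
  have hyz := molecule_eq_spoke_add hsymm (hmid z hzx hzy).1 (hmid z hzx hzy).2
  rcases ha with rfl | rfl <;> rcases hb with rfl | rfl
  · exact ⟨x, z, hzx.symm, by rw [hxz, sub_eq_add_neg]⟩
  · exact ⟨y, z, hzy.symm, hyz.symm⟩
  · exact ⟨z, y, hzy, by rw [molecule_swap hsymm z y, hyz, neg_add]⟩
  · exact ⟨z, x, hzx, by rw [molecule_swap hsymm z x, hxz, neg_sub, sub_eq_neg_add]⟩

theorem molecule_apex_mem_spiderwebGenerators {z : Fin (n + 1)} (hzx : z ≠ x) (hzy : z ≠ y)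
    {a : Fin (n + 1)} (ha : a = x ∨ a = y) :
    molecule n d a z ∈ spiderwebGenerators n d x y ∧
      molecule n d z a ∈ spiderwebGenerators n d x y := by
  have hxz := molecule_eq_spoke_sub (d := d) (x := x) (y := y) z
  have hyz := molecule_eq_spoke_add hsymm (hmid z hzx hzy).1 (hmid z hzx hzy).2
  rw [molecule_swap hsymm z a]
  rcases ha with rfl | rfl
  · rw [hxz, sub_eq_add_neg, neg_add, neg_neg]
    exact ⟨add_mem_spiderwebGenerators hzx hzy (.inl rfl) (.inl rfl),
      add_mem_spiderwebGenerators hzx hzy (.inr rfl) (.inr rfl)⟩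
  · rw [hyz, neg_add]
    exact ⟨add_mem_spiderwebGenerators hzx hzy (.inl rfl) (.inr rfl),
      add_mem_spiderwebGenerators hzx hzy (.inr rfl) (.inl rfl)⟩

theorem molecule_mem_convexHull_spiderwebGenerators
    (heq : ∀ z u, z ≠ u → z ≠ x → z ≠ y → u ≠ x → u ≠ y → d z u = d x y)
    {z₀ : Fin (n + 1)} (hz₀x : z₀ ≠ x) (hz₀y : z₀ ≠ y) {i j : Fin (n + 1)} (hij : i ≠ j) :
    molecule n d i j ∈ convexHull ℝ (spiderwebGenerators n d x y) := by
  set G := spiderwebGenerators n d x y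
  have half_add_mem : ∀ a ∈ G, ∀ b ∈ G, (2 : ℝ)⁻¹ • a + (2 : ℝ)⁻¹ • b ∈ convexHull ℝ G :=
    fun a ha b hb => convex_convexHull ℝ G (subset_convexHull ℝ G ha)
      (subset_convexHull ℝ G hb) (by norm_num) (by norm_num) (by norm_num)
  by_cases hi : i = x ∨ i = y <;> by_cases hj : j = x ∨ j = y
  · -- `m_{y,x} = ½ (m_{y,z₀} + m_{z₀,x})` and `m_{x,y} = -m_{y,x}`
    have hu : ∀ b ∈ ({-molecule n d y x, molecule n d y x} : Set (Fin n → ℝ)),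
        b ∈ convexHull ℝ G := fun b hb => by
      convert half_add_mem _ (add_mem_spiderwebGenerators hz₀x hz₀y (.inl rfl) hb)
        _ (add_mem_spiderwebGenerators hz₀x hz₀y (.inr rfl) hb) using 1
      module
    rcases hi with rfl | rfl <;> rcases hj with rfl | rfl
    · exact absurd rfl hij
    · exact hu _ (.inl (molecule_swap hsymm _ _))
    · exact hu _ (.inr rfl)
    · exact absurd rfl hij
  · obtain ⟨hjx, hjy⟩ := not_or.1 hj
    exact subset_convexHull ℝ G (molecule_apex_mem_spiderwebGenerators hsymm hmid hjx hjy hi).1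
  · obtain ⟨hix, hiy⟩ := not_or.1 hi
    exact subset_convexHull ℝ G (molecule_apex_mem_spiderwebGenerators hsymm hmid hix hiy hj).2
  · obtain ⟨hix, hiy⟩ := not_or.1 hi
    obtain ⟨hjx, hjy⟩ := not_or.1 hj
    convert half_add_mem _ (add_mem_spiderwebGenerators hjx hjy (.inl rfl) (.inr rfl))
      _ (add_mem_spiderwebGenerators hix hiy (.inr rfl) (.inl rfl)) using 1
    rw [molecule_eq_half_spoke_sub (hmid i hix hiy).1 (hmid j hjx hjy).1
      (heq i j hij hix hiy hjx hjy)]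
    module

theorem freeBall_eq_convexHull_spiderwebGenerators
    (heq : ∀ z u, z ≠ u → z ≠ x → z ≠ y → u ≠ x → u ≠ y → d z u = d x y)
    {z₀ : Fin (n + 1)} (hz₀x : z₀ ≠ x) (hz₀y : z₀ ≠ y) :
    freeBall n d = convexHull ℝ (spiderwebGenerators n d x y) :=
  subset_antisymm
    (convexHull_min (fun _ ⟨_, _, hij, hp⟩ =>
      hp ▸ molecule_mem_convexHull_spiderwebGenerators hsymm hmid heq hz₀x hz₀y hij)
      (convex_convexHull ℝ _))
    (convexHull_mono (spiderwebGenerators_subset hsymm hmid))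

end Spiderweb

theorem stmt7_general (n : ℕ) (hn : 3 ≤ n) (d : Fin (n + 1) → Fin (n + 1) → ℝ)
    (hsymm : ∀ i j, d i j = d j i)
    -- `M` is a spiderweb with apexes `x, y`:
    (x y : Fin (n + 1)) (hxy : x ≠ y)
    (hmid : ∀ z, z ≠ x → z ≠ y → 2 * d x z = d x y ∧ 2 * d z y = d x y)
    (heq : ∀ z u, z ≠ u → z ≠ x → z ≠ y → u ≠ x → u ≠ y → d z u = d x y) :
    ∃ T : (Fin (n - 1) → ℝ) →ₗ[ℝ] (Fin n → ℝ),
      freeBall n d =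
        (T '' {v : Fin (n - 1) → ℝ | ∑ i, |v i| ≤ 1}) +
          segment ℝ (-(molecule n d y x)) (molecule n d y x) := by
  have : Nonempty (Fin (n - 1)) := ⟨⟨0, by omega⟩⟩
  let e : Fin (n - 1) ≃ {z : Fin (n + 1) // z ≠ x ∧ z ≠ y} :=
    (Fintype.equivFinOfCardEq (by simp [Fintype.card_subtype_ne_and_ne hxy])).symm
  obtain ⟨z₀, hz₀x, hz₀y⟩ := e ⟨0, by omega⟩
  refine ⟨Fintype.linearCombination ℝ fun k => spoke n d x y (e k), ?_⟩
  rw [image_l1Ball_add_segment,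
    freeBall_eq_convexHull_spiderwebGenerators hsymm hmid heq hz₀x hz₀y, spiderwebGenerators,
    e.surjective.iUnion_comp fun z => {spoke n d x y z, -spoke n d x y z}]

theorem stmt7 (n : ℕ) (hn : 3 ≤ n) (d : Fin (n + 1) → Fin (n + 1) → ℝ)
    (hsymm : ∀ i j, d i j = d j i) (hzero : ∀ i, d i i = 0)
    (hpos : ∀ i j, i ≠ j → 0 < d i j)
    (htri : ∀ i j k, d i k ≤ d i j + d j k)
    -- `M` is a spiderweb with apexes `x, y`:
    (x y : Fin (n + 1)) (hxy : x ≠ y)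
    (hmid : ∀ z, z ≠ x → z ≠ y → 2 * d x z = d x y ∧ 2 * d z y = d x y)
    (heq : ∀ z u, z ≠ u → z ≠ x → z ≠ y → u ≠ x → u ≠ y → d z u = d x y) :
    ∃ T : (Fin (n - 1) → ℝ) →ₗ[ℝ] (Fin n → ℝ),
      freeBall n d =
        (T '' {v : Fin (n - 1) → ℝ | ∑ i, |v i| ≤ 1}) +
          segment ℝ (-(molecule n d y x)) (molecule n d y x) :=
  stmt7_general n hn d hsymm x y hxy hmid heq
end

section
/- Let K_{n+1} denote the metric space of n+1 points with all pairwise distances equal to 1. Then the unit ball of Lip_0(K_{n+1}), namely {x ∈ ℝ^n : |x_i| ≤ 1 for all i, |x_i − x_j| ≤ 1 for all i ≠ j}, equals the convex hull of the points ± Σ_{i∈I} e_i over all subsets I ⊆ {1,...,n}. -/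
/-!
Let `x` be in the ball and have a positive coordinate. With `t` the smallest positive coordinate
and `P = {x > 0}`, every coordinate of `x` lies in `[t, 1]` on `P` and in `[t - 1, 0]` off `P`
(the latter because `|x i₀ - x j| ≤ 1` for a minimiser `i₀`). Hence `x - t • 1_P` lies in
`(1 - t)` times the ball, and `x = t • 1_P + (1 - t) • y` with `y` in the ball, vanishing wherever
`x` does and also at `i₀`. Induction on the size of the support, with `x ↦ -x` for the case of a
negative coordinate, puts the ball inside the convex hull of the `±1_I`; the ball is convex and
contains them, which gives the other inclusion.
-/

open Finset Function

def lipUnitBall (ι : Type*) : Set (ι → ℝ) :=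
  {x | (∀ i, |x i| ≤ 1) ∧ ∀ i j, i ≠ j → |x i - x j| ≤ 1}

def signedIndicators (ι : Type*) [DecidableEq ι] : Set (ι → ℝ) :=
  {v | ∃ I : Finset ι, v = ∑ i ∈ I, Pi.single i (1 : ℝ) ∨ v = -∑ i ∈ I, Pi.single i (1 : ℝ)}

section

variable {ι : Type*}

lemma neg_mem_lipUnitBall {x : ι → ℝ} (hx : x ∈ lipUnitBall ι) : -x ∈ lipUnitBall ι :=
  ⟨fun i => by simpa using hx.1 i, fun i j hij => by
    rw [Pi.neg_apply, Pi.neg_apply, neg_sub_neg, abs_sub_comm]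
    exact hx.2 i j hij⟩

lemma convex_lipUnitBall : Convex ℝ (lipUnitBall ι) := by
  have slab : ∀ ℓ : (ι → ℝ) →ₗ[ℝ] ℝ, Convex ℝ {x | |ℓ x| ≤ 1} := fun ℓ => by
    simpa only [Set.preimage, Set.mem_Icc, ← abs_le] using
      (convex_Icc (-1 : ℝ) 1).linear_preimage ℓ
  let π (i : ι) : (ι → ℝ) →ₗ[ℝ] ℝ := LinearMap.proj i
  have hball : lipUnitBall ι = (⋂ i, {x | |π i x| ≤ 1}) ∩
      ⋂ i, ⋂ j, ⋂ (_ : i ≠ j), {x | |(π i - π j) x| ≤ 1} := by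
    ext x
    simp [lipUnitBall, π]
  rw [hball]
  exact (convex_iInter fun i => slab _).inter
    (convex_iInter fun i => convex_iInter fun j => convex_iInter fun _ => slab _)

lemma exists_eq_smul_mem_lipUnitBall {z : ι → ℝ} {c : ℝ} (h₁ : ∀ i, |z i| ≤ c)
    (h₂ : ∀ i j, i ≠ j → |z i - z j| ≤ c) :
    ∃ y ∈ lipUnitBall ι, z = c • y ∧ support y ⊆ support z := by
  rcases eq_or_ne c 0 with rfl | hc
  · refine ⟨0, ⟨fun _ => by simp, fun _ _ _ => by simp⟩, funext fun i => ?_, by simp⟩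
    simpa using h₁ i
  · have scale : ∀ a : ℝ, |a| ≤ c → |c⁻¹ • a| ≤ 1 := fun a ha => by
      rw [smul_eq_mul, abs_mul, abs_inv]
      exact inv_mul_le_one_of_le₀ (ha.trans (le_abs_self c)) (abs_nonneg c)
    refine ⟨c⁻¹ • z, ⟨fun i => scale _ (h₁ i), fun i j hij => ?_⟩, (smul_inv_smul₀ hc z).symm,
      support_const_smul_subset _ _⟩
    simpa only [Pi.smul_apply, ← smul_sub] using scale _ (h₂ i j hij)

noncomputable def peel (x : ι → ℝ) (t : ℝ) : ι → ℝ := fun j => if 0 < x j then x j - t else x j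

lemma support_peel_ssubset {x : ι → ℝ} {i₀ : ι} (hi₀ : 0 < x i₀) :
    support (peel x (x i₀)) ⊂ support x := by
  refine ssubset_of_subset_of_ne (fun j hj => ?_) fun h => ?_
  · by_cases hxj : 0 < x j
    · exact hxj.ne'
    · simpa [peel, hxj] using hj
  · have : i₀ ∈ support (peel x (x i₀)) := h ▸ hi₀.ne'
    simp [peel, hi₀] at this

lemma peel_bounds {x : ι → ℝ} (hx : x ∈ lipUnitBall ι) {i₀ : ι} (hi₀ : 0 < x i₀)
    (hmin : ∀ j, 0 < x j → x i₀ ≤ x j) (j : ι) :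
    (peel x (x i₀) j = x j - x i₀ ∧ x i₀ ≤ x j ∧ x j ≤ 1) ∨
      (peel x (x i₀) j = x j ∧ x i₀ - 1 ≤ x j ∧ x j ≤ 0) := by
  by_cases hxj : 0 < x j
  · exact Or.inl ⟨if_pos hxj, hmin j hxj, (le_abs_self _).trans (hx.1 j)⟩
  · have hj : i₀ ≠ j := by rintro rfl; exact hxj hi₀
    have := (abs_le.mp (hx.2 i₀ j hj)).2
    exact Or.inr ⟨if_neg hxj, by linarith, by linarith⟩

lemma abs_peel_le {x : ι → ℝ} (hx : x ∈ lipUnitBall ι) {i₀ : ι} (hi₀ : 0 < x i₀)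
    (hmin : ∀ j, 0 < x j → x i₀ ≤ x j) :
    (∀ j, |peel x (x i₀) j| ≤ 1 - x i₀) ∧
      ∀ j k, j ≠ k → |peel x (x i₀) j - peel x (x i₀) k| ≤ 1 - x i₀ := by
  refine ⟨fun j => ?_, fun j k hjk => ?_⟩
  · rcases peel_bounds hx hi₀ hmin j with ⟨hj, _, _⟩ | ⟨hj, _, _⟩ <;>
      rw [hj, abs_le] <;> constructor <;> linarith
  · have := abs_le.mp (hx.2 j k hjk)
    rcases peel_bounds hx hi₀ hmin j with ⟨hj, _, _⟩ | ⟨hj, _, _⟩ <;>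
    rcases peel_bounds hx hi₀ hmin k with ⟨hk, _, _⟩ | ⟨hk, _, _⟩ <;>
      rw [hj, hk, abs_le] <;> constructor <;> linarith

variable [DecidableEq ι]

lemma sum_single_one_apply (I : Finset ι) (j : ι) :
    (∑ i ∈ I, Pi.single i (1 : ℝ)) j = if j ∈ I then 1 else 0 := by
  simp only [Finset.sum_apply, Finset.sum_pi_single]

lemma signedIndicators_subset_lipUnitBall : signedIndicators ι ⊆ lipUnitBall ι := by
  rintro v ⟨I, rfl | rfl⟩ <;> refine ⟨fun i => ?_, fun i j _ => ?_⟩ <;>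
    simp only [Pi.neg_apply, sum_single_one_apply] <;> split_ifs <;> norm_num

lemma neg_signedIndicators : -signedIndicators ι = signedIndicators ι := by
  ext v
  simp only [Set.mem_neg, signedIndicators, Set.mem_ofPred_eq, neg_eq_iff_eq_neg, neg_neg,
    or_comm]

variable [Fintype ι]

lemma eq_smul_add_peel (x : ι → ℝ) (t : ℝ) :
    x = t • ∑ i with 0 < x i, Pi.single i (1 : ℝ) + peel x t := by
  ext j
  by_cases hxj : 0 < x j <;> simp [peel, hxj]

lemma exists_mem_segment_of_pos {x : ι → ℝ} (hx : x ∈ lipUnitBall ι) {i : ι} (hi : 0 < x i) :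
    ∃ v ∈ signedIndicators ι, ∃ y ∈ lipUnitBall ι,
      (support y).ncard < (support x).ncard ∧ x ∈ segment ℝ v y := by
  obtain ⟨i₀, hi₀, hmin⟩ := (univ.filter (0 < x ·)).exists_min_image x ⟨i, by simpa using hi⟩
  simp only [mem_filter, mem_univ, true_and] at hi₀ hmin
  have ht : x i₀ ≤ 1 := (le_abs_self _).trans (hx.1 i₀)
  obtain ⟨y, hy, hpeel, hsupp⟩ := exists_eq_smul_mem_lipUnitBall (abs_peel_le hx hi₀ hmin).1
    (abs_peel_le hx hi₀ hmin).2
  refine ⟨_, ⟨univ.filter (0 < x ·), Or.inl rfl⟩, y, hy, Set.ncard_lt_ncard ?_,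
    x i₀, 1 - x i₀, hi₀.le, sub_nonneg.2 ht, add_sub_cancel _ _, ?_⟩
  · exact hsupp.trans_ssubset (support_peel_ssubset hi₀)
  · rw [← hpeel, ← eq_smul_add_peel]

lemma exists_mem_segment_of_ne_zero {x : ι → ℝ} (hx : x ∈ lipUnitBall ι) (hne : x ≠ 0) :
    ∃ v ∈ signedIndicators ι, ∃ y ∈ lipUnitBall ι,
      (support y).ncard < (support x).ncard ∧ x ∈ segment ℝ v y := by
  obtain ⟨i, hi⟩ : ∃ i, x i ≠ 0 := by simpa [funext_iff] using hne
  rcases hi.lt_or_gt with hneg | hpos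
  · obtain ⟨v, hv, y, hy, hcard, a, b, ha, hb, hab, hxvy⟩ :=
      exists_mem_segment_of_pos (neg_mem_lipUnitBall hx) (neg_pos.2 hneg)
    refine ⟨-v, neg_signedIndicators (ι := ι) ▸ Set.neg_mem_neg.2 hv, -y, neg_mem_lipUnitBall hy,
      by simpa using hcard, a, b, ha, hb, hab, ?_⟩
    rw [smul_neg, smul_neg, ← neg_add, hxvy, neg_neg]
  · exact exists_mem_segment_of_pos hx hpos

theorem lipUnitBall_subset_convexHull : lipUnitBall ι ⊆ convexHull ℝ (signedIndicators ι) := by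
  intro x hx
  induction hn : (support x).ncard using Nat.strong_induction_on generalizing x with
  | _ n ih =>
    rcases eq_or_ne x 0 with rfl | hne
    · exact subset_convexHull ℝ (signedIndicators ι) ⟨∅, Or.inl (by simp)⟩
    obtain ⟨v, hv, y, hy, hcard, hxvy⟩ := exists_mem_segment_of_ne_zero hx hne
    exact (convex_convexHull ℝ _).segment_subset (subset_convexHull ℝ _ hv)
      (ih _ (hn ▸ hcard) hy rfl) hxvy

theorem lipUnitBall_eq_convexHull : lipUnitBall ι = convexHull ℝ (signedIndicators ι) :=
  lipUnitBall_subset_convexHull.antisymm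
    (convexHull_min signedIndicators_subset_lipUnitBall convex_lipUnitBall)

end

theorem stmt9 (n : ℕ) :
    {x : Fin n → ℝ | (∀ i, |x i| ≤ 1) ∧ ∀ i j, i ≠ j → |x i - x j| ≤ 1} =
      convexHull ℝ {v : Fin n → ℝ | ∃ I : Finset (Fin n),
        v = ∑ i ∈ I, Pi.single i (1 : ℝ) ∨ v = -∑ i ∈ I, Pi.single i (1 : ℝ)} :=
  lipUnitBall_eq_convexHull
end

section
/- The polytope {x ∈ ℝ^n : |x_i| ≤ 1 for all i, |x_i − x_j| ≤ 1 for all i ≠ j} equals the Minkowski sum (1/2)[−1,1]^n + (1/2)[−e, e], where e = e_1 + ... + e_n; thus it is a zonotope. -/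
/-!
A point `x` lies in `½[-1,1]ⁿ + ½[-e,e]` iff some `t ∈ [-1,1]` satisfies `|2xᵢ - t| ≤ 1` for all
`i`, i.e. iff the intervals `[-1,1]` and `[2xᵢ - 1, 2xᵢ + 1]` have a common point. For intervals
on the line it suffices that they meet pairwise (take `t` to be the largest left endpoint), and
pairwise intersection is exactly `|xᵢ| ≤ 1` and `|xᵢ - xⱼ| ≤ 1`.
-/

open Pointwise Set

theorem segment_neg_eq_image_smul {E : Type*} [AddCommGroup E] [Module ℝ E] (v : E) :
    segment ℝ (-v) v = (· • v) '' Icc (-1 : ℝ) 1 := by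
  have h := image_segment ℝ (LinearMap.toSpanSingleton ℝ E v).toAffineMap (-1) 1
  simp only [LinearMap.coe_toAffineMap, LinearMap.toSpanSingleton_apply, neg_smul, one_smul] at h
  rw [← h, segment_eq_Icc (by norm_num)]

theorem mem_half_cube_add_half_diagonal {ι : Type*} {x : ι → ℝ} :
    x ∈ (1 / 2 : ℝ) • {y : ι → ℝ | ∀ i, |y i| ≤ 1} + (1 / 2 : ℝ) • segment ℝ (-1) 1 ↔
      ∃ t ∈ Icc (-1 : ℝ) 1, ∀ i, |2 * x i - t| ≤ 1 := by
  rw [← smul_add, mem_smul_set_iff_inv_smul_mem₀ (by norm_num), segment_neg_eq_image_smul]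
  simp only [mem_add, mem_ofPred_eq, exists_exists_and_eq_and, mem_image]
  constructor
  · rintro ⟨y, hy, t, ht, hxy⟩
    refine ⟨t, ht, fun i => ?_⟩
    have hyi : y i = 2 * x i - t := by
      have := congrFun hxy i
      norm_num at this
      linarith
    exact hyi ▸ hy i
  · rintro ⟨t, ht, hx⟩
    refine ⟨_, hx, t, ht, ?_⟩
    ext i
    simp

theorem exists_forall_le_and_forall_le {α ι κ : Type*} [SemilatticeSup α] [Fintype ι]
    [Nonempty ι] {a : ι → α} {b : κ → α} (h : ∀ i j, a i ≤ b j) :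
    ∃ t, (∀ i, a i ≤ t) ∧ ∀ j, t ≤ b j :=
  ⟨Finset.univ.sup' Finset.univ_nonempty a, fun i => Finset.le_sup' a (Finset.mem_univ i),
    fun j => Finset.sup'_le _ _ fun i _ => h i j⟩

theorem exists_abs_two_mul_sub_le_one {ι : Type*} [Fintype ι] {x : ι → ℝ}
    (hx : ∀ i, |x i| ≤ 1) (hxx : ∀ i j, i ≠ j → |x i - x j| ≤ 1) :
    ∃ t ∈ Icc (-1 : ℝ) 1, ∀ i, |2 * x i - t| ≤ 1 := by
  have hdiff (i j : ι) : x i - x j ≤ 1 := by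
    rcases eq_or_ne i j with rfl | hij
    · simp
    · exact (abs_le.1 (hxx i j hij)).2
  -- `none` indexes the interval `[-1, 1]`, `some i` the interval `[2xᵢ - 1, 2xᵢ + 1]`
  let a : Option ι → ℝ := fun o => o.elim (-1) fun i => 2 * x i - 1
  let b : Option ι → ℝ := fun o => o.elim 1 fun i => 2 * x i + 1
  have hab : ∀ o o', a o ≤ b o' := by
    rintro (_ | i) (_ | j)
    · norm_num [a, b]
    · simp only [a, b, Option.elim]; linarith [(abs_le.1 (hx j)).1]
    · simp only [a, b, Option.elim]; linarith [(abs_le.1 (hx i)).2]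
    · simp only [a, b, Option.elim]; linarith [hdiff i j]
  obtain ⟨t, hat, htb⟩ := exists_forall_le_and_forall_le hab
  refine ⟨t, ⟨hat none, htb none⟩, fun i => abs_le.2 ⟨?_, ?_⟩⟩
  · linarith [htb (some i), show b (some i) = 2 * x i + 1 from rfl]
  · linarith [hat (some i), show a (some i) = 2 * x i - 1 from rfl]

theorem abs_le_one_of_abs_two_mul_sub_le_one {ι : Type*} {x : ι → ℝ} {t : ℝ}
    (ht : t ∈ Icc (-1 : ℝ) 1) (hx : ∀ i, |2 * x i - t| ≤ 1) :
    (∀ i, |x i| ≤ 1) ∧ ∀ i j, |x i - x j| ≤ 1 := by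
  obtain ⟨ht₁, ht₂⟩ := ht
  have hlo (i : ι) : -1 ≤ 2 * x i - t := (abs_le.1 (hx i)).1
  have hhi (i : ι) : 2 * x i - t ≤ 1 := (abs_le.1 (hx i)).2
  exact ⟨fun i => abs_le.2 ⟨by linarith [hlo i], by linarith [hhi i]⟩,
    fun i j => abs_le.2 ⟨by linarith [hlo i, hhi j], by linarith [hhi i, hlo j]⟩⟩

theorem stmt10 (n : ℕ) :
    {x : Fin n → ℝ | (∀ i, |x i| ≤ 1) ∧ ∀ i j, i ≠ j → |x i - x j| ≤ 1} =
      (1 / 2 : ℝ) • {x : Fin n → ℝ | ∀ i, |x i| ≤ 1} +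
        (1 / 2 : ℝ) • segment ℝ (-(1 : Fin n → ℝ)) (1 : Fin n → ℝ) := by
  ext x
  rw [mem_half_cube_add_half_diagonal]
  constructor
  · rintro ⟨hx, hxx⟩
    exact exists_abs_two_mul_sub_le_one hx hxx
  · rintro ⟨t, ht, hx⟩
    obtain ⟨hx, hxx⟩ := abs_le_one_of_abs_two_mul_sub_le_one ht hx
    exact ⟨hx, fun i j _ => hxx i j⟩
end

section
/- The volume product of K_{n+1}, defined as |B_{F(K_{n+1})}| · |B_{Lip_0(K_{n+1})}|, equals ((n+1)/n!)·C(2n,n), and this is at least the cross-polytope volume product 4^n/n! for all n ≥ 1. -/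
/-!
The unit ball `B = conv {±eᵢ, eᵢ - eⱼ}` of the free space is `{x | ∑ xᵢ⁺ ≤ 1, ∑ xᵢ⁻ ≤ 1}`: if
`q = ∑ xᵢ⁻ ≤ p = ∑ xᵢ⁺`, write `x⁺ = q u + (p - q) w` and `x⁻ = q v` with `u, v, w` in the standard
simplex `Δ`; then `x = q (u - v) + (p - q) w + (1 - p) 0` with `Δ - Δ ⊆ B`.
Slicing along a coordinate, the volume `V n a b` of `{∑ xᵢ⁺ ≤ a, ∑ xᵢ⁻ ≤ b}` satisfies
`V (n + 1) a b = ∫₀ᵇ V n a s ds + ∫₀ᵃ V n s b ds`, solved by Pascal's rule as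
`V n a b = ∑_{i + j = n} C(n, i) aⁱ/i! bʲ/j!`; by Vandermonde `V n 1 1 = C(2n, n)/n!`.
The polar of `B` is `{|yᵢ| ≤ 1, yᵢ - yⱼ ≤ 1}`. Up to boundaries it is the disjoint union of the cube
`[0, 1]ⁿ` and, for each `i`, of the sheared cube where `yᵢ` is the negative minimum, so its volume
is `n + 1`. The lower bound is `4ⁿ ≤ (n + 1) C(2n, n)`.
-/

open MeasureTheory

/-- The polar of a subset of `ℝ^k`. -/
def polarSet {k : ℕ} (A : Set (Fin k → ℝ)) : Set (Fin k → ℝ) :=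
  {y | ∀ x ∈ A, ∑ i, x i * y i ≤ 1}

/-- The unit ball of the free space over the `(n+1)`-point equilateral metric space. -/
noncomputable def completeBall (n : ℕ) : Set (Fin n → ℝ) :=
  convexHull ℝ {x : Fin n → ℝ |
    (∃ i, x = Pi.single i (1 : ℝ) ∨ x = -Pi.single i (1 : ℝ)) ∨
    (∃ i j, i ≠ j ∧ x = Pi.single i (1 : ℝ) - Pi.single j (1 : ℝ))}

open Finset
open scoped Nat ENNReal Pointwise

lemma four_pow_le_succ_mul_centralBinom (n : ℕ) : 4 ^ n ≤ (n + 1) * n.centralBinom := by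
  rcases lt_or_ge n 4 with hn | hn
  · interval_cases n <;> decide
  · exact (Nat.four_pow_lt_mul_centralBinom n hn).le.trans (Nat.mul_le_mul_right _ n.le_succ)

noncomputable def posNegBallVolume (n : ℕ) (a b : ℝ) : ℝ :=
  ∑ ij ∈ antidiagonal n, (n.choose ij.1 : ℝ) * (a ^ ij.1 / ij.1 ! * (b ^ ij.2 / ij.2 !))

lemma posNegBallVolume_nonneg (n : ℕ) {a b : ℝ} (ha : 0 ≤ a) (hb : 0 ≤ b) :
    0 ≤ posNegBallVolume n a b :=
  sum_nonneg fun _ _ => by positivity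

lemma posNegBallVolume_one_one (n : ℕ) : posNegBallVolume n 1 1 = (2 * n).choose n / n ! := by
  have hterm : ∀ ij ∈ antidiagonal n,
      (n.choose ij.1 : ℝ) * (1 ^ ij.1 / ij.1 ! * (1 ^ ij.2 / ij.2 !)) =
        (n.choose ij.1 * n.choose ij.2 : ℕ) / n ! := by
    rintro ⟨i, j⟩ hij
    rw [HasAntidiagonal.mem_antidiagonal] at hij
    subst hij
    have hfact : ((i + j).choose j * i ! * j ! : ℝ) = (i + j)! := by
      exact_mod_cast Nat.add_choose_mul_factorial_mul_factorial i j
    have hchoose : ((i + j).choose j : ℝ) ≠ 0 := by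
      exact_mod_cast (Nat.choose_pos (Nat.le_add_left j i)).ne'
    rw [← hfact, one_pow, one_pow]
    push_cast
    field_simp
  rw [posNegBallVolume, sum_congr rfl hterm, ← sum_div, two_mul, Nat.add_choose_eq]
  push_cast
  rfl

lemma integral_pow_div_factorial (k : ℕ) (b : ℝ) :
    ∫ x in (0 : ℝ)..b, x ^ k / k ! = b ^ (k + 1) / (k + 1)! := by
  rw [intervalIntegral.integral_div, integral_pow, Nat.factorial_succ]
  push_cast
  field_simp
  ring

lemma integral_posNegBallVolume_right (m : ℕ) (a b : ℝ) :
    ∫ s in (0 : ℝ)..b, posNegBallVolume m a s =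
      ∑ ij ∈ antidiagonal m,
        (m.choose ij.1 : ℝ) * (a ^ ij.1 / ij.1 ! * (b ^ (ij.2 + 1) / (ij.2 + 1)!)) := by
  unfold posNegBallVolume
  rw [intervalIntegral.integral_finsetSum fun _ _ =>
    Continuous.intervalIntegrable (by fun_prop) _ _]
  simp only [intervalIntegral.integral_const_mul, integral_pow_div_factorial]

lemma integral_posNegBallVolume_left (m : ℕ) (a b : ℝ) :
    ∫ s in (0 : ℝ)..a, posNegBallVolume m s b =
      ∑ ij ∈ antidiagonal m,
        (m.choose ij.1 : ℝ) * (a ^ (ij.1 + 1) / (ij.1 + 1)! * (b ^ ij.2 / ij.2 !)) := by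
  unfold posNegBallVolume
  rw [intervalIntegral.integral_finsetSum fun _ _ =>
    Continuous.intervalIntegrable (by fun_prop) _ _]
  simp only [intervalIntegral.integral_const_mul, intervalIntegral.integral_mul_const,
    integral_pow_div_factorial]

lemma posNegBallVolume_succ (m : ℕ) (a b : ℝ) :
    posNegBallVolume (m + 1) a b =
      (∫ s in (0 : ℝ)..b, posNegBallVolume m a s) + ∫ s in (0 : ℝ)..a, posNegBallVolume m s b := by
  rw [integral_posNegBallVolume_right, integral_posNegBallVolume_left, posNegBallVolume,
    sum_antidiagonal_choose_succ_mul (fun i j => a ^ i / i ! * (b ^ j / j !)) m]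
  congr 1
  refine sum_congr rfl fun ij hij => ?_
  rw [← Nat.choose_symm_of_eq_add (HasAntidiagonal.mem_antidiagonal.mp hij).symm]

lemma volume_eq_lintegral_volume_slice {m : ℕ} (i : Fin (m + 1)) {s : Set (Fin (m + 1) → ℝ)}
    (hs : MeasurableSet s) :
    volume s = ∫⁻ t, volume {z : Fin m → ℝ | Fin.insertNth i t z ∈ s} := by
  have hmp := (volume_preserving_piFinSuccAbove (fun _ : Fin (m + 1) => ℝ) i).symm
  rw [← hmp.measure_preimage hs.nullMeasurableSet, Measure.volume_eq_prod,
    Measure.prod_apply (hmp.measurable hs)]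
  rfl

def posNegBall (ι : Type*) [Fintype ι] (a b : ℝ) : Set (ι → ℝ) :=
  {x | ∑ i, (x i)⁺ ≤ a ∧ ∑ i, (x i)⁻ ≤ b}

section posNegBall

variable {ι : Type*} [Fintype ι]

lemma measurableSet_posNegBall (a b : ℝ) : MeasurableSet (posNegBall ι a b) := by
  simp only [posNegBall, Set.ofPred_and]
  exact ((isClosed_le (by fun_prop) continuous_const).inter
    (isClosed_le (by fun_prop) continuous_const)).measurableSet

lemma posNegBall_eq_empty {a b : ℝ} (h : ¬(0 ≤ a ∧ 0 ≤ b)) : posNegBall ι a b = ∅ := by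
  refine Set.eq_empty_of_forall_notMem fun x ⟨hxa, hxb⟩ => h ⟨?_, ?_⟩
  · exact (sum_nonneg fun i _ => posPart_nonneg (x i)).trans hxa
  · exact (sum_nonneg fun i _ => negPart_nonneg (x i)).trans hxb

lemma convex_setOf_sum_posPart_le (a : ℝ) : Convex ℝ {x : ι → ℝ | ∑ i, (x i)⁺ ≤ a} := by
  intro x hx y hy s t hs ht hst
  calc ∑ i, ((s • x + t • y) i)⁺ ≤ ∑ i, (s * (x i)⁺ + t * (y i)⁺) := by
        refine sum_le_sum fun i _ => max_le ?_ (by positivity)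
        simp only [Pi.add_apply, Pi.smul_apply, smul_eq_mul]
        gcongr <;> exact le_posPart _
    _ = s * ∑ i, (x i)⁺ + t * ∑ i, (y i)⁺ := by rw [sum_add_distrib, mul_sum, mul_sum]
    _ ≤ s * a + t * a := by gcongr <;> assumption
    _ = a := by rw [← add_mul, hst, one_mul]

lemma convex_posNegBall (a b : ℝ) : Convex ℝ (posNegBall ι a b) := by
  have : posNegBall ι a b = {x | ∑ i, (x i)⁺ ≤ a} ∩ -{x | ∑ i, (x i)⁺ ≤ b} := by
    ext x
    simp [posNegBall, posPart_neg]
  rw [this]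
  exact (convex_setOf_sum_posPart_le a).inter (convex_setOf_sum_posPart_le b).neg

end posNegBall

lemma insertNth_mem_posNegBall {m : ℕ} (i : Fin (m + 1)) (t : ℝ) (z : Fin m → ℝ) (a b : ℝ) :
    Fin.insertNth i t z ∈ posNegBall (Fin (m + 1)) a b ↔
      z ∈ posNegBall (Fin m) (a - t⁺) (b - t⁻) := by
  simp only [posNegBall, Set.mem_ofPred_eq, Fin.sum_univ_succAbove _ i, Fin.insertNth_apply_same,
    Fin.insertNth_apply_succAbove]
  constructor <;> rintro ⟨h₁, h₂⟩ <;> constructor <;> linarith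

lemma integral_posNegBallVolume_slice (m : ℕ) {a b : ℝ} (ha : 0 ≤ a) (hb : 0 ≤ b) :
    ∫ t in -b..a, posNegBallVolume m (a - t⁺) (b - t⁻) = posNegBallVolume (m + 1) a b := by
  have hint : ∀ c d : ℝ,
      IntervalIntegrable (fun t => posNegBallVolume m (a - t⁺) (b - t⁻)) volume c d :=
    Continuous.intervalIntegrable (by unfold posNegBallVolume; fun_prop)
  rw [← intervalIntegral.integral_add_adjacent_intervals (hint _ 0) (hint 0 _),
    posNegBallVolume_succ]
  congr 1
  · rw [intervalIntegral.integral_congr (g := fun t => posNegBallVolume m a (b + t)) fun t ht => ?_]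
    · simp
    · have ht : t ≤ 0 := by rw [Set.uIcc_of_le (by linarith)] at ht; exact ht.2
      simp [posPart_eq_zero.mpr ht, negPart_eq_neg.mpr ht, sub_eq_add_neg]
  · rw [intervalIntegral.integral_congr (g := fun t => posNegBallVolume m (a - t) b) fun t ht => ?_]
    · simpa using intervalIntegral.integral_comp_sub_left (fun s => posNegBallVolume m s b) a
        (a := 0) (b := a)
    · have ht : 0 ≤ t := by rw [Set.uIcc_of_le ha] at ht; exact ht.1
      simp [posPart_eq_self.mpr ht, negPart_eq_zero.mpr ht]

lemma mem_Icc_iff_sub_posPart_nonneg {a b t : ℝ} (ha : 0 ≤ a) (hb : 0 ≤ b) :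
    t ∈ Set.Icc (-b) a ↔ 0 ≤ a - t⁺ ∧ 0 ≤ b - t⁻ := by
  simp [posPart_def, negPart_def, ha, hb, neg_le, and_comm]

lemma volume_posNegBall (n : ℕ) {a b : ℝ} (ha : 0 ≤ a) (hb : 0 ≤ b) :
    volume (posNegBall (Fin n) a b) = ENNReal.ofReal (posNegBallVolume n a b) := by
  induction n generalizing a b with
  | zero =>
    have : posNegBall (Fin 0) a b = Set.univ := by simp [posNegBall, ha, hb]
    rw [this, ← Set.pi_univ, volume_pi_pi]
    simp [posNegBallVolume]
  | succ m ih =>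
    have hslice : ∀ t, volume (posNegBall (Fin m) (a - t⁺) (b - t⁻)) =
        (Set.Icc (-b) a).indicator
          (fun t => ENNReal.ofReal (posNegBallVolume m (a - t⁺) (b - t⁻))) t := by
      intro t
      by_cases ht : t ∈ Set.Icc (-b) a
      · have ⟨ha', hb'⟩ := (mem_Icc_iff_sub_posPart_nonneg ha hb).mp ht
        rw [Set.indicator_of_mem ht, ih ha' hb']
      · rw [Set.indicator_of_notMem ht,
          posNegBall_eq_empty ((mem_Icc_iff_sub_posPart_nonneg ha hb).not.mp ht), measure_empty]
    rw [volume_eq_lintegral_volume_slice 0 (measurableSet_posNegBall a b)]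
    simp only [insertNth_mem_posNegBall, Set.ofPred_mem_eq, hslice]
    rw [lintegral_indicator measurableSet_Icc, ← ofReal_integral_eq_lintegral_ofReal,
      integral_Icc_eq_integral_Ioc, ← intervalIntegral.integral_of_le (by linarith),
      integral_posNegBallVolume_slice m ha hb]
    · exact (Continuous.integrableOn_Icc (by unfold posNegBallVolume; fun_prop))
    · refine (ae_restrict_iff' measurableSet_Icc).2 (ae_of_all _ fun t ht => ?_)
      have ⟨ha', hb'⟩ := (mem_Icc_iff_sub_posPart_nonneg ha hb).mp ht
      exact posNegBallVolume_nonneg m ha' hb'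

def freeBallVertices (ι : Type*) [DecidableEq ι] : Set (ι → ℝ) :=
  {x | (∃ i, x = Pi.single i 1 ∨ x = -Pi.single i 1) ∨
    ∃ i j, i ≠ j ∧ x = Pi.single i 1 - Pi.single j 1}

lemma completeBall_eq_convexHull (n : ℕ) :
    completeBall n = convexHull ℝ (freeBallVertices (Fin n)) :=
  rfl

lemma mem_sum_smul_stdSimplex {ι : Type*} [Fintype ι] [Nonempty ι] {v : ι → ℝ} (hv : 0 ≤ v) :
    v ∈ (∑ i, v i) • stdSimplex ℝ ι := by
  by_cases h : ∑ i, v i = 0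
  · classical
    obtain rfl : v = 0 := funext ((sum_eq_zero_iff_of_nonneg fun i _ => hv i).mp h · (mem_univ _))
    obtain ⟨i⟩ := ‹Nonempty ι›
    exact ⟨Pi.single i 1, single_mem_stdSimplex ℝ i, by simp⟩
  · refine ⟨(∑ i, v i)⁻¹ • v, ⟨fun i => ?_, ?_⟩, smul_inv_smul₀ h v⟩
    · exact smul_nonneg (inv_nonneg.mpr (sum_nonneg fun i _ => hv i)) (hv i)
    · simp [← mul_sum, h]

section freeBall

variable {ι : Type*} [DecidableEq ι]

lemma neg_mem_freeBallVertices {x : ι → ℝ} (hx : x ∈ freeBallVertices ι) :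
    -x ∈ freeBallVertices ι := by
  rcases hx with ⟨i, rfl | rfl⟩ | ⟨i, j, hij, rfl⟩
  · exact Or.inl ⟨i, Or.inr rfl⟩
  · exact Or.inl ⟨i, Or.inl (neg_neg _)⟩
  · exact Or.inr ⟨j, i, hij.symm, neg_sub _ _⟩

lemma neg_freeBallVertices : -freeBallVertices ι = freeBallVertices ι :=
  Set.ext fun y => ⟨fun hy => neg_neg y ▸ neg_mem_freeBallVertices hy, neg_mem_freeBallVertices⟩

lemma zero_mem_convexHull_freeBallVertices [Nonempty ι] :
    (0 : ι → ℝ) ∈ convexHull ℝ (freeBallVertices ι) := by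
  obtain ⟨i⟩ := ‹Nonempty ι›
  have hi : Pi.single i 1 ∈ freeBallVertices ι := Or.inl ⟨i, Or.inl rfl⟩
  simpa using convex_convexHull ℝ _ (subset_convexHull ℝ _ hi)
    (subset_convexHull ℝ _ (neg_mem_freeBallVertices hi)) (by norm_num : (0 : ℝ) ≤ 1 / 2)
    (by norm_num : (0 : ℝ) ≤ 1 / 2) (by norm_num)

variable [Fintype ι]

lemma freeBallVertices_subset_posNegBall : freeBallVertices ι ⊆ posNegBall ι 1 1 := by
  rintro x (⟨i, rfl | rfl⟩ | ⟨i, j, hij, rfl⟩)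
  · simp [posNegBall, Pi.single_apply, apply_ite]
  · simp [posNegBall, Pi.single_apply, apply_ite]
  · have key : ∀ {i j : ι}, i ≠ j → ∑ k, ((Pi.single i 1 - Pi.single j 1 : ι → ℝ) k)⁺ = 1 := by
      intro i j hij
      rw [sum_eq_single i (fun k _ hki => ?_) (fun h => (h (mem_univ i)).elim)]
      · simp [hij.symm]
      · rcases eq_or_ne k j with rfl | hkj <;> simp [*]
    refine ⟨(key hij).le, ((sum_congr rfl fun k _ => ?_).trans (key hij.symm)).le⟩
    rw [← posPart_neg, Pi.sub_apply, Pi.sub_apply, neg_sub]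

lemma stdSimplex_subset_convexHull_freeBallVertices :
    stdSimplex ℝ ι ⊆ convexHull ℝ (freeBallVertices ι) := by
  rw [← convexHull_rangle_single_eq_stdSimplex]
  refine convexHull_mono ?_
  rintro _ ⟨i, rfl⟩
  exact Or.inl ⟨i, Or.inl rfl⟩

lemma stdSimplex_sub_stdSimplex_subset_convexHull_freeBallVertices [Nonempty ι] :
    stdSimplex ℝ ι - stdSimplex ℝ ι ⊆ convexHull ℝ (freeBallVertices ι) := by
  rw [← convexHull_rangle_single_eq_stdSimplex, ← convexHull_sub]
  refine convexHull_min ?_ (convex_convexHull ℝ _)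
  rintro _ ⟨_, ⟨i, rfl⟩, _, ⟨j, rfl⟩, rfl⟩
  by_cases hij : i = j
  · simpa [hij] using zero_mem_convexHull_freeBallVertices
  · exact subset_convexHull ℝ _ (Or.inr ⟨i, j, hij, rfl⟩)

lemma mem_convexHull_freeBallVertices_of_negPart_le [Nonempty ι] {x : ι → ℝ}
    (hp : ∑ i, (x i)⁺ ≤ 1) (hqp : ∑ i, (x i)⁻ ≤ ∑ i, (x i)⁺) :
    x ∈ convexHull ℝ (freeBallVertices ι) := by
  set B := convexHull ℝ (freeBallVertices ι)
  set p := ∑ i, (x i)⁺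
  set q := ∑ i, (x i)⁻
  have hq : 0 ≤ q := sum_nonneg fun i _ => negPart_nonneg _
  obtain ⟨_, ⟨u, hu, rfl⟩, _, ⟨w, hw, rfl⟩, hpos⟩ :
      x⁺ ∈ q • stdSimplex ℝ ι + (p - q) • stdSimplex ℝ ι := by
    rw [← (convex_stdSimplex ℝ ι).add_smul hq (sub_nonneg.mpr hqp), add_sub_cancel]
    exact mem_sum_smul_stdSimplex (posPart_nonneg x)
  obtain ⟨v, hv, hneg⟩ := mem_sum_smul_stdSimplex (ι := ι) (negPart_nonneg x)
  have hx : x ∈ q • B + (p - q) • B + (1 - p) • B := by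
    refine ⟨_, Set.add_mem_add (Set.smul_mem_smul_set
      (stdSimplex_sub_stdSimplex_subset_convexHull_freeBallVertices (Set.sub_mem_sub hu hv)))
      (Set.smul_mem_smul_set (stdSimplex_subset_convexHull_freeBallVertices hw)), _,
      Set.smul_mem_smul_set zero_mem_convexHull_freeBallVertices, ?_⟩
    rw [← posPart_sub_negPart x, ← hpos, ← hneg]
    module
  have hB : Convex ℝ B := convex_convexHull ℝ _
  rwa [← hB.add_smul hq (sub_nonneg.mpr hqp), ← hB.add_smul (by linarith) (sub_nonneg.mpr hp),
    add_sub_cancel, add_sub_cancel, one_smul] at hx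

lemma posNegBall_subset_convexHull_freeBallVertices [Nonempty ι] :
    posNegBall ι 1 1 ⊆ convexHull ℝ (freeBallVertices ι) := by
  rintro x ⟨hp, hq⟩
  rcases le_total (∑ i, (x i)⁻) (∑ i, (x i)⁺) with hqp | hpq
  · exact mem_convexHull_freeBallVertices_of_negPart_le hp hqp
  · have hneg := mem_convexHull_freeBallVertices_of_negPart_le (x := -x) (by simpa using hq)
      (by simpa using hpq)
    rwa [← neg_neg x, ← Set.mem_neg, ← convexHull_neg, neg_freeBallVertices]

lemma convexHull_freeBallVertices [Nonempty ι] :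
    convexHull ℝ (freeBallVertices ι) = posNegBall ι 1 1 :=
  (convexHull_min freeBallVertices_subset_posNegBall (convex_posNegBall 1 1)).antisymm
    posNegBall_subset_convexHull_freeBallVertices

end freeBall

lemma polarSet_convexHull {k : ℕ} (s : Set (Fin k → ℝ)) :
    polarSet (convexHull ℝ s) = polarSet s := by
  refine Set.Subset.antisymm (fun y hy x hx => hy x (subset_convexHull ℝ s hx)) fun y hy => ?_
  have hlin : IsLinearMap ℝ fun x : Fin k → ℝ => ∑ i, x i * y i :=
    ⟨fun u v => by simp [add_mul, sum_add_distrib], fun c u => by simp [mul_sum, mul_assoc]⟩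
  exact fun x hx => convexHull_min hy (convex_halfSpace_le hlin 1) hx

/-- The unit ball of `Lip₀(K_{n+1})`, a function `f` vanishing at the base point being recorded by
its values `y i = f i` at the other `n` points. -/
def lipZeroBall (ι : Type*) : Set (ι → ℝ) :=
  {y | (∀ i, |y i| ≤ 1) ∧ ∀ i j, y i - y j ≤ 1}

lemma polarSet_freeBallVertices (n : ℕ) :
    polarSet (freeBallVertices (Fin n)) = lipZeroBall (Fin n) := by
  ext y
  change (∀ x ∈ freeBallVertices (Fin n), x ⬝ᵥ y ≤ 1) ↔ _
  constructor
  · intro h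
    have hle : ∀ i, y i ≤ 1 := fun i => by
      simpa [single_dotProduct] using h _ (Or.inl ⟨i, Or.inl rfl⟩)
    have hge : ∀ i, -1 ≤ y i := fun i => by
      simpa [single_dotProduct, neg_le] using h _ (Or.inl ⟨i, Or.inr rfl⟩)
    refine ⟨fun i => abs_le.mpr ⟨hge i, hle i⟩, fun i j => ?_⟩
    rcases eq_or_ne i j with rfl | hij
    · simp
    · simpa [single_dotProduct, sub_dotProduct] using h _ (Or.inr ⟨i, j, hij, rfl⟩)
  · rintro ⟨habs, hsub⟩ x (⟨i, rfl | rfl⟩ | ⟨i, j, -, rfl⟩)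
    · simpa [single_dotProduct] using (abs_le.mp (habs i)).2
    · simpa [single_dotProduct, neg_le] using (abs_le.mp (habs i)).1
    · simpa [single_dotProduct, sub_dotProduct] using hsub i j

def shearedBox {ι : Type*} (i : ι) (I J : Set ℝ) : Set (ι → ℝ) :=
  {y | y i ∈ I ∧ ∀ j ≠ i, y j - y i ∈ J}

lemma measurableSet_shearedBox {ι : Type*} [Countable ι] (i : ι) {I J : Set ℝ}
    (hI : MeasurableSet I) (hJ : MeasurableSet J) : MeasurableSet (shearedBox i I J) := by
  have : shearedBox i I J =
      (fun y => y i) ⁻¹' I ∩ ⋂ j, ⋂ (_ : j ≠ i), (fun y => y j - y i) ⁻¹' J := by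
    ext y; simp [shearedBox]
  rw [this]
  exact (measurable_pi_apply i hI).inter
    (.iInter fun j => .iInter fun _ => (by fun_prop : Measurable fun y : ι → ℝ => y j - y i) hJ)

lemma insertNth_mem_shearedBox {m : ℕ} (i : Fin (m + 1)) (I J : Set ℝ) (t : ℝ) (z : Fin m → ℝ) :
    Fin.insertNth i t z ∈ shearedBox i I J ↔
      t ∈ I ∧ z ∈ Set.pi Set.univ fun _ => (· - t) ⁻¹' J := by
  simp [shearedBox, Fin.forall_iff_succAbove i]

lemma volume_shearedBox {n : ℕ} (i : Fin n) {I J : Set ℝ} (hI : MeasurableSet I)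
    (hJ : MeasurableSet J) : volume (shearedBox i I J) = volume I * volume J ^ (n - 1) := by
  obtain ⟨m, rfl⟩ := Nat.exists_eq_add_one_of_ne_zero i.pos.ne'
  have hslice : ∀ t, volume {z | Fin.insertNth i t z ∈ shearedBox i I J} =
      I.indicator (fun _ => volume J ^ m) t := by
    intro t
    by_cases ht : t ∈ I
    · simp only [insertNth_mem_shearedBox, ht, true_and, Set.ofPred_mem_eq, volume_pi_pi,
        Set.indicator_of_mem, sub_eq_add_neg, measure_preimage_add_right]
      simp
    · simp [insertNth_mem_shearedBox, ht]
  rw [volume_eq_lintegral_volume_slice i (measurableSet_shearedBox i hI hJ)]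
  simp [hslice, lintegral_indicator_const hI, mul_comm]

lemma lipZeroBall_subset_union_shearedBox (n : ℕ) :
    lipZeroBall (Fin n) ⊆ Set.Icc 0 1 ∪ ⋃ i, shearedBox i (Set.Icc (-1) 0) (Set.Icc 0 1) := by
  rintro y ⟨habs, hsub⟩
  by_cases hnonneg : ∀ j, 0 ≤ y j
  · exact Or.inl ⟨hnonneg, fun j => (abs_le.mp (habs j)).2⟩
  · push Not at hnonneg
    obtain ⟨j, hj⟩ := hnonneg
    obtain ⟨i, -, hmin⟩ := exists_min_image univ y ⟨j, mem_univ j⟩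
    refine Or.inr (Set.mem_iUnion.mpr ⟨i, ⟨(abs_le.mp (habs i)).1, ?_⟩, fun k _ => ?_⟩)
    · linarith [hmin j (mem_univ j)]
    · exact ⟨sub_nonneg.mpr (hmin k (mem_univ k)), hsub k i⟩

lemma union_shearedBox_subset_lipZeroBall (n : ℕ) :
    Set.Icc 0 1 ∪ ⋃ i, shearedBox i (Set.Ico (-1) 0) (Set.Ioc 0 1) ⊆ lipZeroBall (Fin n) := by
  rintro y (⟨hy₀, hy₁⟩ | hy)
  · have hy₀ : ∀ j, 0 ≤ y j := hy₀
    have hy₁ : ∀ j, y j ≤ 1 := hy₁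
    exact ⟨fun j => abs_le.mpr ⟨by linarith [hy₀ j], hy₁ j⟩, fun j k => by linarith [hy₁ j, hy₀ k]⟩
  · obtain ⟨i, ⟨hi₁, hi₂⟩, hy⟩ := Set.mem_iUnion.mp hy
    have hrange : ∀ j, y i ≤ y j ∧ y j ≤ y i + 1 := by
      intro j
      rcases eq_or_ne j i with rfl | hji
      · constructor <;> linarith
      · have := hy j hji
        constructor <;> linarith [this.1, this.2]
    exact ⟨fun j => abs_le.mpr ⟨by linarith [hrange j], by linarith [hrange j]⟩,
      fun j k => by linarith [hrange j, hrange k]⟩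

lemma disjoint_shearedBox {n : ℕ} {I J : Set ℝ} (hJ : J ⊆ Set.Ioi 0) :
    Pairwise (Function.onFun Disjoint fun i : Fin n => shearedBox i I J) := by
  intro i j hij
  refine Set.disjoint_left.mpr fun y ⟨_, hi⟩ ⟨_, hj⟩ => ?_
  have h₁ : 0 < y j - y i := hJ (hi j hij.symm)
  have h₂ : 0 < y i - y j := hJ (hj i hij)
  linarith

theorem volume_lipZeroBall (n : ℕ) : volume (lipZeroBall (Fin n)) = n + 1 := by
  have hbox : volume (Set.Icc (0 : Fin n → ℝ) 1) = 1 := by simp [Real.volume_Icc_pi]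
  apply le_antisymm
  · calc volume (lipZeroBall (Fin n))
        ≤ volume (Set.Icc (0 : Fin n → ℝ) 1) +
            ∑ i, volume (shearedBox i (Set.Icc (-1 : ℝ) 0) (Set.Icc 0 1)) := by
          refine (measure_mono (lipZeroBall_subset_union_shearedBox n)).trans ?_
          refine (measure_union_le _ _).trans ?_
          gcongr
          exact measure_iUnion_fintype_le _ _
      _ = n + 1 := by
          simp [hbox, volume_shearedBox, add_comm]
  · calc (n + 1 : ℝ≥0∞)
        = volume (Set.Icc (0 : Fin n → ℝ) 1) +
            ∑ i, volume (shearedBox i (Set.Ico (-1 : ℝ) 0) (Set.Ioc 0 1)) := by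
          rw [hbox, sum_congr rfl fun (i : Fin n) _ =>
            volume_shearedBox i measurableSet_Ico measurableSet_Ioc]
          simp [add_comm]
      _ = volume (Set.Icc 0 1 ∪ ⋃ i, shearedBox i (Set.Ico (-1 : ℝ) 0) (Set.Ioc 0 1)) := by
          rw [measure_union _ (.iUnion fun i => measurableSet_shearedBox i measurableSet_Ico
              measurableSet_Ioc), measure_iUnion (disjoint_shearedBox fun _ h => h.1)
              fun i => measurableSet_shearedBox i measurableSet_Ico measurableSet_Ioc, tsum_fintype]
          refine Set.disjoint_iUnion_right.mpr fun i => Set.disjoint_left.mpr fun y hy hy' => ?_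
          have : 0 ≤ y i := hy.1 i
          linarith [hy'.1.2]
      _ ≤ volume (lipZeroBall (Fin n)) := measure_mono (union_shearedBox_subset_lipZeroBall n)

theorem stmt14 (n : ℕ) (hn : 1 ≤ n) :
    volume (completeBall n) * volume (polarSet (completeBall n)) =
        ((n + 1 : ENNReal) * (Nat.choose (2 * n) n : ENNReal)) /
          (Nat.factorial n : ENNReal) ∧
      (4 : ENNReal) ^ n / (Nat.factorial n : ENNReal) ≤
        volume (completeBall n) * volume (polarSet (completeBall n)) := by
  have : Nonempty (Fin n) := ⟨⟨0, hn⟩⟩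
  have hball : volume (completeBall n) = (2 * n).choose n / n ! := by
    rw [completeBall_eq_convexHull, convexHull_freeBallVertices,
      volume_posNegBall n zero_le_one zero_le_one, posNegBallVolume_one_one,
      ENNReal.ofReal_div_of_pos (by positivity), ENNReal.ofReal_natCast, ENNReal.ofReal_natCast]
  have hpolar : volume (polarSet (completeBall n)) = n + 1 := by
    rw [completeBall_eq_convexHull, polarSet_convexHull, polarSet_freeBallVertices,
      volume_lipZeroBall]
  have hprod : volume (completeBall n) * volume (polarSet (completeBall n)) =
      (n + 1) * (2 * n).choose n / n ! := by
    rw [hball, hpolar, mul_comm, mul_div_assoc]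
  refine ⟨hprod, hprod ▸ ENNReal.div_le_div_right ?_ _⟩
  exact_mod_cast Nat.centralBinom_eq_two_mul_choose n ▸ four_pow_le_succ_mul_centralBinom n
end

section
/- Let X_1, X_2 be nontrivial normed spaces and 1 < p < ∞. For every λ ∈ [0,1] and extreme points x_1 of B_{X_1} and x_2 of B_{X_2}, the point (λ^{1/p} x_1, (1−λ)^{1/p} x_2) is an extreme point of the unit ball of X_1 ⊕_p X_2. Consequently, if dim X_1, dim X_2 ≥ 1 and both unit balls have extreme points, the unit ball of X_1 ⊕_p X_2 has infinitely many extreme points; in particular, a polytope cannot be the unit ball of a p-sum of two nontrivial spaces for 1 < p < ∞. -/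
/-!
Write `u = (a • x₁, b • x₂)` with `a ^ p + b ^ p = 1` and suppose `u = t • y + s • z` with `y`, `z`
in the unit ball. In each component the triangle inequality and convexity of `r ↦ r ^ p` give
`a ^ p ≤ t ‖y₁‖ ^ p + s ‖z₁‖ ^ p` (and likewise for `b`); summing and using `‖y‖, ‖z‖ ≤ 1` forces
equality in both components, so strict convexity of `r ↦ r ^ p` for `p > 1` yields
`‖y₁‖ = ‖z₁‖ = a`. As `a • x₁` is extreme in the ball of radius `a`, `y₁ = z₁ = a • x₁`.
Letting `λ` run over `[0, 1]` gives an injective curve of extreme points, while the convex hull of a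
finite set has only finitely many extreme points.
-/

open scoped ENNReal
open Metric Set

lemma norm_eq_one_of_mem_extremePoints_closedBall {X : Type*} [NormedAddCommGroup X]
    [NormedSpace ℝ X] [Nontrivial X] {x : X} (hx : x ∈ (closedBall (0 : X) 1).extremePoints ℝ) :
    ‖x‖ = 1 :=
  mem_sphere_zero_iff_norm.1 (extremePoints_closedBall_subset_sphere hx)

lemma smul_mem_extremePoints_closedBall {X : Type*} [NormedAddCommGroup X] [NormedSpace ℝ X]
    {x : X} (hx : x ∈ (closedBall (0 : X) 1).extremePoints ℝ) {a : ℝ} (ha : 0 ≤ a) :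
    a • x ∈ (closedBall (0 : X) a).extremePoints ℝ := by
  rcases ha.eq_or_lt with rfl | ha
  · simp [closedBall_zero, extremePoints_singleton]
  · have h := image_extremePoints (LinearEquiv.smulOfNeZero ℝ X a ha.ne') (closedBall 0 1)
    have hball : ⇑(LinearEquiv.smulOfNeZero ℝ X a ha.ne') '' closedBall 0 1 = closedBall 0 a := by
      simp [image_smul, smul_closedBall' ha.ne', abs_of_pos ha]
    exact hball ▸ h ▸ mem_image_of_mem _ hx

lemma rpow_le_and_eq_of_le_add_mul {q c α β t s : ℝ} (hq : 1 < q) (hc : 0 ≤ c) (hα : 0 ≤ α)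
    (hβ : 0 ≤ β) (ht : 0 < t) (hs : 0 < s) (hts : t + s = 1) (h : c ≤ t * α + s * β) :
    c ^ q ≤ t * α ^ q + s * β ^ q ∧ (t * α ^ q + s * β ^ q ≤ c ^ q → α = c ∧ β = c) := by
  have hcq : c ^ q ≤ (t * α + s * β) ^ q := Real.rpow_le_rpow hc h (by linarith)
  refine ⟨hcq.trans ((convexOn_rpow hq.le).2 hα hβ ht.le hs.le hts), fun hle ↦ ?_⟩
  obtain rfl : α = β := by
    by_contra hne
    have := (strictConvexOn_rpow hq).2 (mem_Ici.2 hα) (mem_Ici.2 hβ) hne ht hs hts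
    simp only [smul_eq_mul] at this
    linarith
  rw [← add_mul, hts, one_mul] at h hle
  have : α ≤ c := (Real.rpow_le_rpow_iff hα hc (by linarith)).1 hle
  exact ⟨le_antisymm this h, le_antisymm this h⟩

lemma rpow_le_and_eq_of_smul_eq_add_smul {X : Type*} [NormedAddCommGroup X] [NormedSpace ℝ X]
    [Nontrivial X] {q a t s : ℝ} (hq : 1 < q) {x y z : X}
    (hx : x ∈ (closedBall (0 : X) 1).extremePoints ℝ) (ha : 0 ≤ a) (ht : 0 < t) (hs : 0 < s)
    (hts : t + s = 1) (h : a • x = t • y + s • z) :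
    a ^ q ≤ t * ‖y‖ ^ q + s * ‖z‖ ^ q ∧
      (t * ‖y‖ ^ q + s * ‖z‖ ^ q ≤ a ^ q → y = a • x ∧ z = a • x) := by
  have hle : a ≤ t * ‖y‖ + s * ‖z‖ :=
    calc a = ‖t • y + s • z‖ := by
          rw [← h, norm_smul, Real.norm_of_nonneg ha,
            norm_eq_one_of_mem_extremePoints_closedBall hx, mul_one]
      _ ≤ t * ‖y‖ + s * ‖z‖ :=
        (convexOn_norm convex_univ).2 (mem_univ y) (mem_univ z) ht.le hs.le hts
  refine (rpow_le_and_eq_of_le_add_mul hq ha (norm_nonneg y) (norm_nonneg z) ht hs hts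
    hle).imp_right fun heq hle ↦ ?_
  obtain ⟨hy, hz⟩ := heq hle
  exact mem_extremePoints.1 (smul_mem_extremePoints_closedBall hx ha) |>.2 y
    (mem_closedBall_zero_iff.2 hy.le) z (mem_closedBall_zero_iff.2 hz.le)
    ⟨t, s, ht, hs, hts, h.symm⟩

lemma WithLp.prod_norm_le_one_iff {p : ℝ≥0∞} [Fact (1 ≤ p)] (hp : 0 < p.toReal)
    {α β : Type*} [NormedAddCommGroup α] [NormedAddCommGroup β] (x : WithLp p (α × β)) :
    ‖x‖ ≤ 1 ↔ ‖x.fst‖ ^ p.toReal + ‖x.snd‖ ^ p.toReal ≤ 1 := by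
  rw [WithLp.prod_norm_eq_add hp, one_div,
    Real.rpow_inv_le_iff_of_pos (by positivity) zero_le_one hp, Real.one_rpow]

theorem WithLp.toLp_smul_mem_extremePoints_closedBall {p : ℝ≥0∞} [Fact (1 ≤ p)] (hp : 1 < p)
    (hp_top : p ≠ ⊤) {X₁ X₂ : Type*} [NormedAddCommGroup X₁] [NormedSpace ℝ X₁] [Nontrivial X₁]
    [NormedAddCommGroup X₂] [NormedSpace ℝ X₂] [Nontrivial X₂] {a b : ℝ} (ha : 0 ≤ a) (hb : 0 ≤ b)
    (hab : a ^ p.toReal + b ^ p.toReal = 1) {x₁ : X₁} {x₂ : X₂}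
    (hx₁ : x₁ ∈ (closedBall (0 : X₁) 1).extremePoints ℝ)
    (hx₂ : x₂ ∈ (closedBall (0 : X₂) 1).extremePoints ℝ) :
    WithLp.toLp p (a • x₁, b • x₂) ∈ (closedBall (0 : WithLp p (X₁ × X₂)) 1).extremePoints ℝ := by
  have hq : 1 < p.toReal := by
    simpa using (ENNReal.toReal_lt_toReal ENNReal.one_ne_top hp_top).2 hp
  have hq₀ : 0 < p.toReal := by linarith
  refine ⟨?_, fun y hy z hz ⟨t, s, ht, hs, hts, hyz⟩ ↦ ?_⟩
  · rw [mem_closedBall_zero_iff, WithLp.prod_norm_le_one_iff hq₀]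
    simp [norm_smul, norm_eq_one_of_mem_extremePoints_closedBall, hx₁, hx₂, abs_of_nonneg, ha, hb,
      hab]
  rw [mem_closedBall_zero_iff, WithLp.prod_norm_le_one_iff hq₀] at hy hz
  have hyz₁ : a • x₁ = t • y.fst + s • z.fst := (congrArg WithLp.fst hyz).symm
  have hyz₂ : b • x₂ = t • y.snd + s • z.snd := (congrArg WithLp.snd hyz).symm
  obtain ⟨hle₁, heq₁⟩ := rpow_le_and_eq_of_smul_eq_add_smul hq hx₁ ha ht hs hts hyz₁
  obtain ⟨hle₂, heq₂⟩ := rpow_le_and_eq_of_smul_eq_add_smul hq hx₂ hb ht hs hts hyz₂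
  have hsum : t * (‖y.fst‖ ^ p.toReal + ‖y.snd‖ ^ p.toReal) +
      s * (‖z.fst‖ ^ p.toReal + ‖z.snd‖ ^ p.toReal) ≤ 1 := by
    nlinarith
  obtain ⟨hy₁, -⟩ := heq₁ (by linarith)
  obtain ⟨hy₂, -⟩ := heq₂ (by linarith)
  exact WithLp.ofLp_injective p (Prod.ext hy₁ hy₂)

theorem convexHull_ne_of_infinite_extremePoints {𝕜 E : Type*} [Field 𝕜] [LinearOrder 𝕜]
    [IsStrictOrderedRing 𝕜] [AddCommGroup E] [Module 𝕜 E] {C s : Set E}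
    (hC : (C.extremePoints 𝕜).Infinite) (hs : s.Finite) : convexHull 𝕜 s ≠ C := by
  rintro rfl
  exact hC (hs.subset extremePoints_convexHull_subset)

theorem stmt18 (p : ℝ≥0∞) [Fact (1 ≤ p)] (hp1 : 1 < p) (hptop : p ≠ ⊤)
    (X1 X2 : Type*) [NormedAddCommGroup X1] [NormedSpace ℝ X1] [Nontrivial X1]
    [NormedAddCommGroup X2] [NormedSpace ℝ X2] [Nontrivial X2] :
    (∀ l : ℝ, l ∈ Set.Icc (0 : ℝ) 1 →
      ∀ x1 ∈ (Metric.closedBall (0 : X1) 1).extremePoints ℝ,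
      ∀ x2 ∈ (Metric.closedBall (0 : X2) 1).extremePoints ℝ,
        (WithLp.equiv p (X1 × X2)).symm
            (l ^ (1 / p.toReal) • x1, (1 - l) ^ (1 / p.toReal) • x2) ∈
          (Metric.closedBall (0 : WithLp p (X1 × X2)) 1).extremePoints ℝ) ∧
    (((Metric.closedBall (0 : X1) 1).extremePoints ℝ).Nonempty →
      ((Metric.closedBall (0 : X2) 1).extremePoints ℝ).Nonempty →
      ((Metric.closedBall (0 : WithLp p (X1 × X2)) 1).extremePoints ℝ).Infinite ∧
      ∀ s : Set (WithLp p (X1 × X2)), s.Finite →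
        convexHull ℝ s ≠ Metric.closedBall (0 : WithLp p (X1 × X2)) 1) := by
  have hq : p.toReal ≠ 0 := (ENNReal.toReal_pos (zero_lt_one.trans hp1).ne' hptop).ne'
  have hext : ∀ l ∈ Icc (0 : ℝ) 1, ∀ x1 ∈ (closedBall (0 : X1) 1).extremePoints ℝ,
      ∀ x2 ∈ (closedBall (0 : X2) 1).extremePoints ℝ,
        WithLp.toLp p (l ^ (1 / p.toReal) • x1, (1 - l) ^ (1 / p.toReal) • x2) ∈
          (closedBall (0 : WithLp p (X1 × X2)) 1).extremePoints ℝ := by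
    intro l ⟨hl₀, hl₁⟩ x1 hx1 x2 hx2
    refine WithLp.toLp_smul_mem_extremePoints_closedBall hp1 hptop (by positivity)
      (Real.rpow_nonneg (sub_nonneg.2 hl₁) _) ?_ hx1 hx2
    rw [one_div, Real.rpow_inv_rpow hl₀ hq, Real.rpow_inv_rpow (sub_nonneg.2 hl₁) hq]
    ring
  refine ⟨hext, fun ⟨e1, he1⟩ ⟨e2, he2⟩ ↦ ?_⟩
  set f : ℝ → WithLp p (X1 × X2) :=
    fun l ↦ WithLp.toLp p (l ^ (1 / p.toReal) • e1, (1 - l) ^ (1 / p.toReal) • e2)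
  have he1₀ : e1 ≠ 0 := ne_zero_of_norm_ne_zero <|
    (norm_eq_one_of_mem_extremePoints_closedBall he1).symm ▸ one_ne_zero
  have hf : InjOn f (Icc 0 1) := InjOn.of_comp (f := f) (g := WithLp.fst) <|
    (smul_left_injective ℝ he1₀).comp_injOn <|
      (Real.rpow_left_injOn (one_div_ne_zero hq)).mono fun _ hl ↦ hl.1
  have hinf : ((closedBall (0 : WithLp p (X1 × X2)) 1).extremePoints ℝ).Infinite :=
    ((Icc_infinite zero_lt_one).image hf).mono
      (image_subset_iff.2 fun l hl ↦ hext l hl e1 he1 e2 he2)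
  exact ⟨hinf, fun s hs ↦ convexHull_ne_of_infinite_extremePoints hinf hs⟩
end
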